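/- Let d be an odd prime and n ∈ ℕ. Suppose {(U_i, V_i)}_{i=1..n} is a conjugate tuple of Clifford gates, i.e. all U_i, V_i ∈ C_2^n, U_i^d = V_i^d = I, U_i V_i = ω V_i U_i for each i, and any two gates belonging to distinct pairs commute. Then there exists a third-level gate G ∈ C_3^n with G Z_i G* = U_i and G X_i G* = V_i for all i, and G is unique up to a scalar of modulus one: if G' ∈ C_3^n also satisfies these equations then G' = λG for some λ ∈ ℂ with |λ| = 1. Conversely, for every G ∈ C_3^n, the family {(G Z_i G*, G X_i G*)}_{i=1..n} is a conjugate tuple of Clifford gates. -/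

import Mathlib

open Matrix

noncomputable section

/-- The space of `n`-qudit gates: `d^n × d^n` complex matrices indexed by `(ZMod d)^n`. -/
abbrev Mat (d n : ℕ) := Matrix (Fin n → ZMod d) (Fin n → ZMod d) ℂ

/-- The primitive `d`-th root of unity `ω = exp(2πi/d)`. -/
def omega (d : ℕ) : ℂ := Complex.exp (2 * Real.pi * Complex.I / d)

/-- `ω` raised to the canonical integer lift of `c : ZMod d`. -/
def omegaPow (d : ℕ) (c : ZMod d) : ℂ := omega d ^ c.val

/-- The Pauli gate `Z^p`, acting by `Z^p |z⟩ = ω^(p·z) |z⟩`. -/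
def ZP (d n : ℕ) [NeZero d] (p : Fin n → ZMod d) : Mat d n :=
  Matrix.diagonal fun z => omegaPow d (p ⬝ᵥ z)

/-- The Pauli gate `X^q`, acting by `X^q |z⟩ = |z + q⟩`. -/
def XQ (d n : ℕ) [NeZero d] (q : Fin n → ZMod d) : Mat d n :=
  Matrix.of fun z' z => if z' = z + q then 1 else 0

/-- The basic Pauli gate `Z_i`. -/
def Zi (d n : ℕ) [NeZero d] (i : Fin n) : Mat d n := ZP d n (Pi.single i 1)

/-- The basic Pauli gate `X_i`. -/
def Xi (d n : ℕ) [NeZero d] (i : Fin n) : Mat d n := XQ d n (Pi.single i 1)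

/-- The Pauli group `C_1^n`. -/
def Pauli (d n : ℕ) [NeZero d] : Set (Mat d n) :=
  { M | ∃ (c : ZMod d) (p q : Fin n → ZMod d), M = omegaPow d c • (ZP d n p * XQ d n q) }

/-- The Clifford group `C_2^n`. -/
def Clifford (d n : ℕ) [NeZero d] : Set (Mat d n) :=
  { C | C ∈ Matrix.unitaryGroup (Fin n → ZMod d) ℂ ∧ ∀ P ∈ Pauli d n, C * P * Cᴴ ∈ Pauli d n }

/-- The third level `C_3^n` of the Clifford hierarchy. -/
def Third (d n : ℕ) [NeZero d] : Set (Mat d n) :=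
  { G | G ∈ Matrix.unitaryGroup (Fin n → ZMod d) ℂ ∧ ∀ P ∈ Pauli d n, G * P * Gᴴ ∈ Clifford d n }

/-- The quadratic diagonal gate `D_Φ |z⟩ = ω^(zᵀ Φ z) |z⟩`. -/
def quadGate (d n : ℕ) [NeZero d] (Φ : Matrix (Fin n) (Fin n) (ZMod d)) : Mat d n :=
  Matrix.diagonal fun z => omegaPow d (z ⬝ᵥ (Φ *ᵥ z))

/-- A gate is semi-Clifford if it is `C₁ D C₂` for Cliffords `C₁, C₂` and a
diagonal third-level gate `D`. -/
def SemiClifford (d n : ℕ) [NeZero d] (G : Mat d n) : Prop :=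
  ∃ C₁ ∈ Clifford d n, ∃ C₂ ∈ Clifford d n, ∃ D ∈ Third d n, D.IsDiag ∧ G = C₁ * D * C₂

/-- A Clifford gate is almost diagonal if it is `D_Φ P` for symmetric `Φ` and Pauli `P`. -/
def AlmostDiag (d n : ℕ) [NeZero d] (M : Mat d n) : Prop :=
  ∃ Φ : Matrix (Fin n) (Fin n) (ZMod d), Φ.IsSymm ∧ ∃ P ∈ Pauli d n, M = quadGate d n Φ * P

/-- A third-level gate is simplified if its conjugate tuple consists of
almost diagonal Clifford gates. -/
def Simplified (d n : ℕ) [NeZero d] (G : Mat d n) : Prop :=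
  ∀ i : Fin n, AlmostDiag d n (G * Zi d n i * Gᴴ) ∧ AlmostDiag d n (G * Xi d n i * Gᴴ)

/-- The symplectic product on `(ZMod d)⁴`. -/
def symp4 (d : ℕ) (u v : Fin 4 → ZMod d) : ZMod d :=
  u 0 * v 1 - u 1 * v 0 + u 2 * v 3 - u 3 * v 2


/-- `(Uᵢ, Vᵢ)` is a conjugate tuple of Clifford gates: each `Uᵢ, Vᵢ` is Clifford,
each pair satisfies the Weyl relations, and members of distinct pairs commute. -/
def IsConjCliffTuple (d n : ℕ) [NeZero d] (U V : Fin n → Mat d n) : Prop :=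
  (∀ i, U i ∈ Clifford d n) ∧ (∀ i, V i ∈ Clifford d n) ∧
  (∀ i, U i ^ d = 1) ∧ (∀ i, V i ^ d = 1) ∧
  (∀ i, U i * V i = omega d • (V i * U i)) ∧
  (∀ i j, i ≠ j → U i * U j = U j * U i) ∧
  (∀ i j, i ≠ j → U i * V j = V j * U i) ∧
  (∀ i j, i ≠ j → V i * V j = V j * V i)

section Aux

variable {d n : ℕ} [NeZero d]

lemma pow_mod_eq {M : Type*} [Monoid M] {W : M} (hW : W ^ d = 1) (m : ℕ) :
    W ^ (m % d) = W ^ m := by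
  conv_rhs => rw [← Nat.div_add_mod m d]
  rw [pow_add, pow_mul, hW, one_pow, one_mul]

lemma omega_prim : IsPrimitiveRoot (omega d) d :=
  Complex.isPrimitiveRoot_exp d (NeZero.ne d)

lemma omega_pow_d : omega d ^ d = 1 := omega_prim.pow_eq_one

lemma omegaPow_natCast (m : ℕ) : omegaPow d (m : ZMod d) = omega d ^ m := by
  rw [omegaPow, ZMod.val_natCast, pow_mod_eq omega_pow_d]

lemma omegaPow_add (a b : ZMod d) :
    omegaPow d (a + b) = omegaPow d a * omegaPow d b := by
  rw [← ZMod.natCast_rightInverse a, ← ZMod.natCast_rightInverse b, ← Nat.cast_add,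
    omegaPow_natCast, omegaPow_natCast, omegaPow_natCast, pow_add]

lemma omegaPow_mul_val (a b : ZMod d) :
    omega d ^ (a.val * b.val) = omegaPow d (a * b) := by
  rw [omegaPow, ZMod.val_mul, pow_mod_eq omega_pow_d]

lemma omegaPow_zero : omegaPow d (0 : ZMod d) = 1 := by
  simp [omegaPow, ZMod.val_zero]

lemma abs_omega : ‖omega d‖ = 1 := by
  rw [omega, show (2 * ↑Real.pi * Complex.I / (d : ℂ)) = ((2 * Real.pi / d : ℝ) : ℂ) * Complex.I by
    push_cast; ring]
  exact Complex.norm_exp_ofReal_mul_I _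

lemma abs_omegaPow (c : ZMod d) : ‖omegaPow d c‖ = 1 := by
  rw [omegaPow, norm_pow, abs_omega, one_pow]

lemma omegaPow_ne_zero (c : ZMod d) : omegaPow d c ≠ 0 := by
  intro h
  have := abs_omegaPow (d := d) c
  rw [h] at this; simp at this

lemma star_omegaPow (c : ZMod d) : star (omegaPow d c) = omegaPow d (-c) := by
  have h1 : omegaPow d c * omegaPow d (-c) = 1 := by
    rw [← omegaPow_add]; simp [omegaPow_zero]
  have h2 : omegaPow d c * star (omegaPow d c) = 1 := by
    rw [Complex.star_def, Complex.mul_conj, Complex.normSq_eq_norm_sq, abs_omegaPow]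
    norm_num
  exact mul_left_cancel₀ (omegaPow_ne_zero c) (h2.trans h1.symm)

lemma omegaPow_eq_one_iff (c : ZMod d) : omegaPow d c = 1 ↔ c = 0 := by
  rw [omegaPow, omega_prim.pow_eq_one_iff_dvd]
  constructor
  · intro h
    exact (ZMod.val_eq_zero c).mp (Nat.eq_zero_of_dvd_of_lt h (ZMod.val_lt c))
  · rintro rfl; simp

lemma ZP_mul (p p' : Fin n → ZMod d) : ZP d n p * ZP d n p' = ZP d n (p + p') := by
  simp only [ZP, diagonal_mul_diagonal, ← omegaPow_add, ← add_dotProduct]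

lemma ZP_zero : ZP d n 0 = 1 := by
  simp [ZP, omegaPow_zero]

lemma XQ_mul (q q' : Fin n → ZMod d) : XQ d n q * XQ d n q' = XQ d n (q + q') := by
  ext z' z
  rw [Matrix.mul_apply]
  simp only [XQ, Matrix.of_apply]
  rw [Finset.sum_eq_single (z + q')]
  · simp only [if_pos rfl, mul_one]
    rw [add_assoc, add_comm q' q]
    simp
  · intro y _ hy
    rw [if_neg hy, mul_zero]
  · simp

lemma XQ_zero : XQ d n 0 = 1 := by
  ext z' z
  simp [XQ, Matrix.one_apply, eq_comm]

lemma ZP_pow (p : Fin n → ZMod d) (k : ℕ) : ZP d n p ^ k = ZP d n (k • p) := by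
  induction k with
  | zero => simp [ZP_zero]
  | succ k ih => rw [pow_succ, ih, ZP_mul, succ_nsmul]

lemma XQ_pow (q : Fin n → ZMod d) (k : ℕ) : XQ d n q ^ k = XQ d n (k • q) := by
  induction k with
  | zero => simp [XQ_zero]
  | succ k ih => rw [pow_succ, ih, XQ_mul, succ_nsmul]

lemma ZP_mul_XQ (p q : Fin n → ZMod d) :
    ZP d n p * XQ d n q = omegaPow d (p ⬝ᵥ q) • (XQ d n q * ZP d n p) := by
  ext z' z
  rw [Matrix.smul_apply]
  simp only [ZP, XQ]
  rw [Matrix.diagonal_mul, Matrix.mul_diagonal]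
  simp only [Matrix.of_apply, smul_eq_mul]
  by_cases h : z' = z + q
  · subst h
    rw [if_pos rfl, mul_one, one_mul, dotProduct_add, omegaPow_add, mul_comm]
  · rw [if_neg h, mul_zero, zero_mul, mul_zero]

lemma ZP_ct (p : Fin n → ZMod d) : (ZP d n p)ᴴ = ZP d n (-p) := by
  ext a b
  rw [Matrix.conjTranspose_apply]
  simp only [ZP, Matrix.diagonal_apply]
  by_cases h : a = b
  · subst h; rw [if_pos rfl, if_pos rfl, star_omegaPow, neg_dotProduct]
  · rw [if_neg (Ne.symm h), if_neg h, star_zero]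

lemma XQ_ct (q : Fin n → ZMod d) : (XQ d n q)ᴴ = XQ d n (-q) := by
  ext a b
  rw [Matrix.conjTranspose_apply]
  simp only [XQ, Matrix.of_apply]
  have hiff : b = a + q ↔ a = b + -q :=
    ⟨fun h => by simp [h, add_assoc], fun h => by simp [h, add_assoc]⟩
  by_cases h : b = a + q
  · rw [if_pos h, if_pos (hiff.mp h), star_one]
  · rw [if_neg h, if_neg (fun hh => h (hiff.mpr hh)), star_zero]

lemma ZP_unitary (p : Fin n → ZMod d) : ZP d n p ∈ Matrix.unitaryGroup (Fin n → ZMod d) ℂ := by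
  rw [Matrix.mem_unitaryGroup_iff']
  rw [Matrix.star_eq_conjTranspose, ZP_ct, ZP_mul, neg_add_cancel, ZP_zero]

lemma XQ_unitary (q : Fin n → ZMod d) : XQ d n q ∈ Matrix.unitaryGroup (Fin n → ZMod d) ℂ := by
  rw [Matrix.mem_unitaryGroup_iff']
  rw [Matrix.star_eq_conjTranspose, XQ_ct, XQ_mul, neg_add_cancel, XQ_zero]

lemma Zi_mem_Pauli (i : Fin n) : Zi d n i ∈ Pauli d n :=
  ⟨0, Pi.single i 1, 0, by rw [omegaPow_zero, one_smul, XQ_zero, mul_one]; rfl⟩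

lemma Xi_mem_Pauli (i : Fin n) : Xi d n i ∈ Pauli d n :=
  ⟨0, 0, Pi.single i 1, by rw [omegaPow_zero, one_smul, ZP_zero, one_mul]; rfl⟩

end Aux
section Aux2

variable {d n : ℕ} [NeZero d]

lemma pow_val_add {W : Mat d n} (hW : W ^ d = 1) (a b : ZMod d) :
    W ^ (a + b).val = W ^ a.val * W ^ b.val := by
  rw [← pow_add, ZMod.val_add, pow_mod_eq hW]

def lprod (W : Fin n → Mat d n) (k : Fin n → ZMod d) (l : List (Fin n)) : Mat d n :=
  (l.map fun i => W i ^ (k i).val).prod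

@[simp] lemma lprod_nil (W : Fin n → Mat d n) (k : Fin n → ZMod d) :
    lprod W k [] = 1 := rfl

@[simp] lemma lprod_cons (W : Fin n → Mat d n) (k : Fin n → ZMod d) (i : Fin n)
    (l : List (Fin n)) : lprod W k (i :: l) = W i ^ (k i).val * lprod W k l := by
  simp [lprod]

lemma commute_lprod {W : Fin n → Mat d n} {k : Fin n → ZMod d} {l : List (Fin n)}
    {A : Mat d n} (h : ∀ j ∈ l, Commute A (W j)) : Commute A (lprod W k l) := by
  apply Commute.list_prod_right
  intro x hx
  simp only [List.mem_map] at hx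
  obtain ⟨j, hj, rfl⟩ := hx
  exact (h j hj).pow_right _

lemma lprod_zero (W : Fin n → Mat d n) (l : List (Fin n)) : lprod W 0 l = 1 := by
  induction l with
  | nil => rfl
  | cons i l ih => simp [ih, ZMod.val_zero]

lemma lprod_add {W : Fin n → Mat d n} (hWd : ∀ i, W i ^ d = 1)
    (hWW : ∀ i j, i ≠ j → Commute (W i) (W j)) (k k' : Fin n → ZMod d) :
    ∀ l : List (Fin n), l.Nodup → lprod W (k + k') l = lprod W k l * lprod W k' l := by
  intro l
  induction l with
  | nil => simp
  | cons i l ih =>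
    intro hl
    rw [List.nodup_cons] at hl
    have hc : Commute (lprod W k l) (W i ^ (k' i).val) :=
      (commute_lprod (fun j hj => ((hWW i j (fun e => hl.1 (e ▸ hj))).pow_left _))).symm
    rw [lprod_cons, lprod_cons, lprod_cons, ih hl.2, Pi.add_apply, pow_val_add (hWd i)]
    exact hc.symm.mul_mul_mul_comm _ _

lemma lprod_single_of_not_mem {W : Fin n → Mat d n} {i : Fin n} {c : ZMod d}
    {l : List (Fin n)} (hi : i ∉ l) : lprod W (Pi.single i c) l = 1 := by
  induction l with
  | nil => rfl
  | cons j l ih =>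
    simp only [List.mem_cons, not_or] at hi
    rw [lprod_cons, ih hi.2, Pi.single_eq_of_ne (Ne.symm hi.1), ZMod.val_zero, pow_zero, one_mul]

lemma lprod_single_of_mem {W : Fin n → Mat d n} {i : Fin n} {c : ZMod d} :
    ∀ {l : List (Fin n)}, l.Nodup → i ∈ l → lprod W (Pi.single i c) l = W i ^ c.val := by
  intro l
  induction l with
  | nil => simp
  | cons j l ih =>
    intro hl hm
    rw [List.nodup_cons] at hl
    rcases List.mem_cons.mp hm with h | h
    · subst h
      rw [lprod_cons, Pi.single_eq_same, lprod_single_of_not_mem hl.1, mul_one]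
    · have hji : j ≠ i := fun e => hl.1 (e ▸ h)
      rw [lprod_cons, Pi.single_eq_of_ne hji, ZMod.val_zero, pow_zero, one_mul, ih hl.2 h]

lemma weyl_pow {A B : Mat d n} (h : A * B = omega d • (B * A)) (a b : ℕ) :
    A ^ a * B ^ b = (omega d ^ (a * b)) • (B ^ b * A ^ a) := by
  have key : ∀ a : ℕ, A ^ a * B = (omega d ^ a) • (B * A ^ a) := by
    intro a
    induction a with
    | zero => simp
    | succ a ih =>
      rw [pow_succ, mul_assoc, h, Matrix.mul_smul, ← mul_assoc, ih, Matrix.smul_mul, smul_smul,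
        ← pow_succ', mul_assoc]
  induction b with
  | zero => simp
  | succ b ih =>
    rw [pow_succ, ← mul_assoc, ih, Matrix.smul_mul, mul_assoc, key a, Matrix.mul_smul, smul_smul,
      ← pow_add, ← Nat.mul_succ, ← mul_assoc, ← pow_succ]

lemma weyl_pow_val {A B : Mat d n} (h : A * B = omega d • (B * A)) (a b : ZMod d) :
    A ^ a.val * B ^ b.val = omegaPow d (a * b) • (B ^ b.val * A ^ a.val) := by
  rw [weyl_pow h, omegaPow_mul_val]

lemma lprod_weyl {U V : Fin n → Mat d n}
    (hUV : ∀ i, U i * V i = omega d • (V i * U i))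
    (hUVc : ∀ i j, i ≠ j → Commute (U i) (V j))
    (p q : Fin n → ZMod d) :
    ∀ l : List (Fin n), l.Nodup →
      lprod U p l * lprod V q l
        = omegaPow d ((l.map fun i => p i * q i).sum) • (lprod V q l * lprod U p l) := by
  intro l
  induction l with
  | nil => simp [omegaPow_zero]
  | cons i l ih =>
    intro hl
    rw [List.nodup_cons] at hl
    have hbc : Commute (lprod U p l) (V i ^ (q i).val) :=
      (commute_lprod (fun j hj =>
        ((hUVc j i (fun e => hl.1 (e ▸ hj))).symm.pow_left _))).symm
    have hae : Commute (U i ^ (p i).val) (lprod V q l) :=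
      commute_lprod (fun j hj => (hUVc i j (fun e => hl.1 (e ▸ hj))).pow_left _)
    have hac := weyl_pow_val (hUV i) (p i) (q i)
    have hbe := ih hl.2
    rw [lprod_cons, lprod_cons, List.map_cons, List.sum_cons]
    calc U i ^ (p i).val * lprod U p l * (V i ^ (q i).val * lprod V q l)
        = U i ^ (p i).val * V i ^ (q i).val * (lprod U p l * lprod V q l) :=
          hbc.mul_mul_mul_comm _ _
      _ = (omegaPow d (p i * q i) • (V i ^ (q i).val * U i ^ (p i).val)) *
            (omegaPow d ((l.map fun i => p i * q i).sum) • (lprod V q l * lprod U p l)) := by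
          rw [hac, hbe]
      _ = (omegaPow d (p i * q i) * omegaPow d ((l.map fun i => p i * q i).sum)) •
            (V i ^ (q i).val * U i ^ (p i).val * (lprod V q l * lprod U p l)) := by
          rw [Matrix.smul_mul, Matrix.mul_smul, smul_smul]
      _ = omegaPow d (p i * q i + (l.map fun i => p i * q i).sum) •
            (V i ^ (q i).val * lprod V q l * (U i ^ (p i).val * lprod U p l)) := by
          rw [← omegaPow_add, hae.mul_mul_mul_comm]

lemma lprod_unitary {W : Fin n → Mat d n}
    (h : ∀ i, W i ∈ Matrix.unitaryGroup (Fin n → ZMod d) ℂ) (k : Fin n → ZMod d)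
    (l : List (Fin n)) : lprod W k l ∈ Matrix.unitaryGroup (Fin n → ZMod d) ℂ := by
  induction l with
  | nil => exact Submonoid.one_mem _
  | cons i l ih =>
    rw [lprod_cons]
    exact Submonoid.mul_mem _ (pow_mem (h i) _) ih

lemma unitary_star_mul {A : Mat d n} (h : A ∈ Matrix.unitaryGroup (Fin n → ZMod d) ℂ) :
    Aᴴ * A = 1 := by
  rw [← Matrix.star_eq_conjTranspose]
  exact Matrix.mem_unitaryGroup_iff'.mp h

lemma unitary_mul_star {A : Mat d n} (h : A ∈ Matrix.unitaryGroup (Fin n → ZMod d) ℂ) :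
    A * Aᴴ = 1 := by
  rw [← Matrix.star_eq_conjTranspose]
  exact Matrix.mem_unitaryGroup_iff.mp h

lemma clifford_one : (1 : Mat d n) ∈ Clifford d n := by
  refine ⟨Submonoid.one_mem _, fun P hP => ?_⟩
  simpa [Matrix.conjTranspose_one] using hP

lemma clifford_mul {A B : Mat d n} (hA : A ∈ Clifford d n) (hB : B ∈ Clifford d n) :
    A * B ∈ Clifford d n := by
  refine ⟨Submonoid.mul_mem _ hA.1 hB.1, fun P hP => ?_⟩
  have h : A * B * P * (A * B)ᴴ = A * (B * P * Bᴴ) * Aᴴ := by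
    rw [Matrix.conjTranspose_mul]
    simp only [Matrix.mul_assoc]
  rw [h]
  exact hA.2 _ (hB.2 P hP)

lemma clifford_pow {A : Mat d n} (hA : A ∈ Clifford d n) (k : ℕ) : A ^ k ∈ Clifford d n := by
  induction k with
  | zero => simpa using clifford_one
  | succ k ih => rw [pow_succ]; exact clifford_mul ih hA

lemma clifford_smul {A : Mat d n} (hA : A ∈ Clifford d n) {c : ℂ}
    (hc : ‖c‖ = 1) : c • A ∈ Clifford d n := by
  have hcc : star c * c = 1 := by
    rw [Complex.star_def, mul_comm, Complex.mul_conj, Complex.normSq_eq_norm_sq, hc]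
    norm_num
  constructor
  · rw [Matrix.mem_unitaryGroup_iff']
    rw [star_smul, Matrix.smul_mul, Matrix.mul_smul, smul_smul, hcc, one_smul]
    exact Matrix.mem_unitaryGroup_iff'.mp hA.1
  · intro P hP
    have h : (c • A) * P * (c • A)ᴴ = (c * star c) • (A * P * Aᴴ) := by
      rw [Matrix.conjTranspose_smul, Matrix.smul_mul, Matrix.smul_mul, Matrix.mul_smul, smul_smul]
    rw [h, mul_comm, hcc, one_smul]
    exact hA.2 P hP

lemma clifford_lprod {W : Fin n → Mat d n} (h : ∀ i, W i ∈ Clifford d n)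
    (k : Fin n → ZMod d) (l : List (Fin n)) : lprod W k l ∈ Clifford d n := by
  induction l with
  | nil => exact clifford_one
  | cons i l ih =>
    rw [lprod_cons]
    exact clifford_mul (clifford_pow (h i) _) ih

lemma gconj_mul {G A B : Mat d n} (hG : Gᴴ * G = 1) :
    G * (A * B) * Gᴴ = (G * A * Gᴴ) * (G * B * Gᴴ) := by
  have h : (G * A * Gᴴ) * (G * B * Gᴴ) = G * (A * (Gᴴ * G * B)) * Gᴴ := by
    simp only [Matrix.mul_assoc]
  rw [h, hG, one_mul, ← Matrix.mul_assoc]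

lemma gconj_pow {G A : Mat d n} (hGl : Gᴴ * G = 1) (hGr : G * Gᴴ = 1) (k : ℕ) :
    G * A ^ k * Gᴴ = (G * A * Gᴴ) ^ k := by
  induction k with
  | zero => rw [pow_zero, pow_zero, mul_one, hGr]
  | succ k ih => rw [pow_succ, pow_succ, gconj_mul hGl, ih]

lemma gconj_smul {G A : Mat d n} (c : ℂ) : G * (c • A) * Gᴴ = c • (G * A * Gᴴ) := by
  rw [Matrix.mul_smul, Matrix.smul_mul]

end Aux2
section Aux3

variable {d n : ℕ} [NeZero d]

lemma single_smul_zero (i : Fin n) : d • (Pi.single i (1 : ZMod d) : Fin n → ZMod d) = 0 := by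
  funext j
  rw [Pi.smul_apply, Pi.single_apply]
  by_cases h : j = i <;> simp [h, nsmul_eq_mul, ZMod.natCast_self]

lemma Zi_pow_d (i : Fin n) : Zi d n i ^ d = 1 := by
  rw [Zi, ZP_pow, single_smul_zero, ZP_zero]

lemma Xi_pow_d (i : Fin n) : Xi d n i ^ d = 1 := by
  rw [Xi, XQ_pow, single_smul_zero, XQ_zero]

lemma single_dv_single (i j : Fin n) :
    ((Pi.single i (1 : ZMod d) : Fin n → ZMod d) ⬝ᵥ (Pi.single j 1 : Fin n → ZMod d))
      = (Pi.single j (1 : ZMod d) : Fin n → ZMod d) i := by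
  rw [single_dotProduct, one_mul]

lemma Zi_mul_Xi (hd1 : 1 < d) (i : Fin n) :
    Zi d n i * Xi d n i = omega d • (Xi d n i * Zi d n i) := by
  rw [Zi, Xi, ZP_mul_XQ, single_dv_single, Pi.single_eq_same]
  congr 1
  rw [omegaPow, ZMod.val_one_eq_one_mod, Nat.mod_eq_of_lt hd1, pow_one]

lemma Zi_mul_Zi (i j : Fin n) : Zi d n i * Zi d n j = Zi d n j * Zi d n i := by
  rw [Zi, Zi, ZP_mul, ZP_mul, add_comm]

lemma Xi_mul_Xi (i j : Fin n) : Xi d n i * Xi d n j = Xi d n j * Xi d n i := by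
  rw [Xi, Xi, XQ_mul, XQ_mul, add_comm]

lemma Zi_mul_Xi_ne {i j : Fin n} (h : i ≠ j) :
    Zi d n i * Xi d n j = Xi d n j * Zi d n i := by
  rw [Zi, Xi, ZP_mul_XQ, single_dv_single, Pi.single_eq_of_ne h, omegaPow_zero, one_smul]

lemma part2 (hd1 : 1 < d) (G : Mat d n) (hG : G ∈ Third d n) :
    IsConjCliffTuple d n (fun i => G * Zi d n i * Gᴴ) (fun i => G * Xi d n i * Gᴴ) := by
  obtain ⟨hGu, hGc⟩ := hG
  have hGl : Gᴴ * G = 1 := unitary_star_mul hGu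
  have hGr : G * Gᴴ = 1 := unitary_mul_star hGu
  refine ⟨fun i => hGc _ (Zi_mem_Pauli i), fun i => hGc _ (Xi_mem_Pauli i), ?_, ?_, ?_, ?_, ?_, ?_⟩
  · intro i
    rw [← gconj_pow hGl hGr, Zi_pow_d, mul_one, hGr]
  · intro i
    rw [← gconj_pow hGl hGr, Xi_pow_d, mul_one, hGr]
  · intro i
    rw [← gconj_mul hGl, ← gconj_mul hGl, Zi_mul_Xi hd1, gconj_smul]
  · intro i j hij
    rw [← gconj_mul hGl, ← gconj_mul hGl, Zi_mul_Zi]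
  · intro i j hij
    rw [← gconj_mul hGl, ← gconj_mul hGl, Zi_mul_Xi_ne hij]
  · intro i j hij
    rw [← gconj_mul hGl, ← gconj_mul hGl, Xi_mul_Xi]

end Aux3
section Aux4

variable {d n : ℕ} [NeZero d]

lemma mulVec_apply'' (M : Mat d n) (v : (Fin n → ZMod d) → ℂ) (x : Fin n → ZMod d) :
    (M *ᵥ v) x = ∑ y, M x y * v y := rfl

lemma mulVec_fixed_pow {A : Mat d n} {x : (Fin n → ZMod d) → ℂ} (h : A *ᵥ x = x) (k : ℕ) :
    A ^ k *ᵥ x = x := by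
  induction k with
  | zero => simp
  | succ k ih => rw [pow_succ, ← Matrix.mulVec_mulVec, h, ih]

lemma lprod_mulVec_fixed {W : Fin n → Mat d n} {x : (Fin n → ZMod d) → ℂ}
    (h : ∀ i, W i *ᵥ x = x) (k : Fin n → ZMod d) (l : List (Fin n)) :
    lprod W k l *ᵥ x = x := by
  induction l with
  | nil => simp [Matrix.one_mulVec]
  | cons i l ih => rw [lprod_cons, ← Matrix.mulVec_mulVec, ih, mulVec_fixed_pow (h i)]

lemma existence (hd1 : 1 < d) (U V : Fin n → Mat d n)
    (hUc : ∀ i, U i ∈ Clifford d n) (hVc : ∀ i, V i ∈ Clifford d n)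
    (hUd : ∀ i, U i ^ d = 1) (hVd : ∀ i, V i ^ d = 1)
    (hUV : ∀ i, U i * V i = omega d • (V i * U i))
    (hUU : ∀ i j, i ≠ j → Commute (U i) (U j))
    (hUVc : ∀ i j, i ≠ j → Commute (U i) (V j))
    (hVV : ∀ i j, i ≠ j → Commute (V i) (V j)) :
    ∃ G ∈ Third d n, ∀ i, G * Zi d n i * Gᴴ = U i ∧ G * Xi d n i * Gᴴ = V i := by
  classical
  have hL : (List.finRange n).Nodup := List.nodup_finRange n
  have hmem : ∀ i : Fin n, i ∈ List.finRange n := fun i => List.mem_finRange i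
  have hval1 : (1 : ZMod d).val = 1 := by
    rw [ZMod.val_one_eq_one_mod, Nat.mod_eq_of_lt hd1]
  set L := List.finRange n with hLdef
  set Up : (Fin n → ZMod d) → Mat d n := fun p => lprod U p L with hUp
  set Vp : (Fin n → ZMod d) → Mat d n := fun q => lprod V q L with hVp
  have hUpadd : ∀ p p', Up (p + p') = Up p * Up p' := fun p p' => lprod_add hUd hUU p p' L hL
  have hVpadd : ∀ q q', Vp (q + q') = Vp q * Vp q' := fun q q' => lprod_add hVd hVV q q' L hL
  have hUpsingle : ∀ i, Up (Pi.single i 1) = U i := fun i => by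
    show lprod U (Pi.single i 1) L = U i
    rw [lprod_single_of_mem hL (hmem i), hval1, pow_one]
  have hVpsingle : ∀ i, Vp (Pi.single i 1) = V i := fun i => by
    show lprod V (Pi.single i 1) L = V i
    rw [lprod_single_of_mem hL (hmem i), hval1, pow_one]
  have hweyl : ∀ p q, Up p * Vp q = omegaPow d (p ⬝ᵥ q) • (Vp q * Up p) := by
    intro p q
    have hsum : ((L.map fun i => p i * q i).sum) = p ⬝ᵥ q :=
      (Fin.sum_univ_def fun i => p i * q i).symm
    have h := lprod_weyl hUV hUVc p q L hL
    rw [hsum] at h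
    exact h
  have hUpu : ∀ p, Up p ∈ Matrix.unitaryGroup (Fin n → ZMod d) ℂ :=
    fun p => lprod_unitary (fun i => (hUc i).1) p L
  have hVpu : ∀ q, Vp q ∈ Matrix.unitaryGroup (Fin n → ZMod d) ℂ :=
    fun q => lprod_unitary (fun i => (hVc i).1) q L
  have hUpc : ∀ p, Up p ∈ Clifford d n := fun p => clifford_lprod hUc p L
  have hVpc : ∀ q, Vp q ∈ Clifford d n := fun q => clifford_lprod hVc q L
  -- the projector
  set Proj : Mat d n := ∑ k : Fin n → ZMod d, Up k with hProjdef
  have hProj1 : ∀ i, U i * Proj = Proj := by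
    intro i
    rw [hProjdef, Matrix.mul_sum]
    calc ∑ k : Fin n → ZMod d, U i * Up k
        = ∑ k : Fin n → ZMod d, Up (Pi.single i 1 + k) := by
          refine Finset.sum_congr rfl fun k _ => ?_
          rw [hUpadd, hUpsingle]
      _ = ∑ k : Fin n → ZMod d, Up k :=
          Fintype.sum_equiv (Equiv.addLeft (Pi.single i 1)) _ _ (fun k => rfl)
  have htr0 : ∀ k : Fin n → ZMod d, k ≠ 0 → Matrix.trace (Up k) = 0 := by
    intro k hk
    obtain ⟨i, hki⟩ := Function.ne_iff.mp hk
    have hVu : V i * (V i)ᴴ = 1 := unitary_mul_star (hVc i).1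
    have hVsu : (V i)ᴴ * V i = 1 := unitary_star_mul (hVc i).1
    have hw : Up k * V i = omegaPow d (k i) • (V i * Up k) := by
      have h := hweyl k (Pi.single i 1)
      rwa [hVpsingle, dotProduct_single, mul_one] at h
    have key : Matrix.trace (Up k) = omegaPow d (k i) * Matrix.trace (Up k) := by
      conv_lhs => rw [← Matrix.mul_one (Up k), ← hVu, ← Matrix.mul_assoc]
      rw [Matrix.trace_mul_comm, hw, Matrix.mul_smul, Matrix.trace_smul,
        ← Matrix.mul_assoc, hVsu, Matrix.one_mul, smul_eq_mul]
    have hfact : (omegaPow d (k i) - 1) * Matrix.trace (Up k) = 0 := by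
      rw [sub_mul, one_mul, ← key, sub_self]
    rcases mul_eq_zero.mp hfact with h | h
    · exact absurd (sub_eq_zero.mp h) fun he => hki ((omegaPow_eq_one_iff _).mp he)
    · exact h
  have htr : Matrix.trace Proj = (Fintype.card (Fin n → ZMod d) : ℂ) := by
    rw [hProjdef, Matrix.trace_sum, Finset.sum_eq_single 0]
    · have h0 : Up 0 = 1 := lprod_zero U L
      rw [h0, Matrix.trace_one]
    · intro k _ hk; exact htr0 k hk
    · simp
  have hcard : (Fintype.card (Fin n → ZMod d) : ℂ) ≠ 0 :=
    Nat.cast_ne_zero.mpr Fintype.card_ne_zero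
  have hdiag : ∃ z₀ : Fin n → ZMod d, Proj z₀ z₀ ≠ 0 := by
    by_contra h
    push_neg at h
    have h0 : Matrix.trace Proj = 0 := by
      rw [Matrix.trace]
      exact Finset.sum_eq_zero fun z _ => h z
    rw [htr] at h0
    exact hcard h0
  obtain ⟨z₀, hz₀⟩ := hdiag
  set ψ₀ : (Fin n → ZMod d) → ℂ := fun z' => Proj z' z₀ with hψ₀def
  have hψ₀z₀ : ψ₀ z₀ ≠ 0 := hz₀
  have hψ₀U : ∀ i, U i *ᵥ ψ₀ = ψ₀ := by
    intro i
    funext z'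
    have h2 : (U i * Proj) z' z₀ = Proj z' z₀ := by rw [hProj1 i]
    rw [Matrix.mul_apply] at h2
    rw [mulVec_apply'']
    exact h2
  -- normalization
  set s : ℝ := ∑ y, Complex.normSq (ψ₀ y) with hsdef
  have hs_pos : 0 < s :=
    Finset.sum_pos' (fun y _ => Complex.normSq_nonneg _)
      ⟨z₀, Finset.mem_univ _, Complex.normSq_pos.mpr hψ₀z₀⟩
  set r : ℂ := ((Real.sqrt s : ℝ) : ℂ)⁻¹ with hrdef
  set ψ : (Fin n → ZMod d) → ℂ := r • ψ₀ with hψdef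
  have hψU : ∀ i, U i *ᵥ ψ = ψ := fun i => by
    rw [hψdef, Matrix.mulVec_smul, hψ₀U i]
  have h1 : star ψ₀ ⬝ᵥ ψ₀ = ((s : ℝ) : ℂ) := by
    rw [hsdef]
    push_cast
    refine Finset.sum_congr rfl fun y _ => ?_
    rw [Pi.star_apply, Complex.star_def, mul_comm, Complex.mul_conj]
  have hsqrt : ((Real.sqrt s : ℝ) : ℂ) * ((Real.sqrt s : ℝ) : ℂ) = ((s : ℝ) : ℂ) := by
    rw [← Complex.ofReal_mul, Real.mul_self_sqrt hs_pos.le]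
  have hsne : ((s : ℝ) : ℂ) ≠ 0 := by
    simpa using hs_pos.ne'
  have hnorm : star ψ ⬝ᵥ ψ = 1 := by
    have hstar : star r = r := by
      rw [hrdef, star_inv₀, Complex.star_def, Complex.conj_ofReal]
    calc star ψ ⬝ᵥ ψ = star r * (r * ((s : ℝ) : ℂ)) := by
          rw [hψdef, star_smul, smul_dotProduct, dotProduct_smul, h1, smul_eq_mul, smul_eq_mul]
      _ = 1 := by
          rw [hstar, hrdef, ← mul_assoc, ← mul_inv, hsqrt, inv_mul_cancel₀ hsne]
  -- key dot products
  have hdot : ∀ c : Fin n → ZMod d,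
      star ψ ⬝ᵥ (Vp c *ᵥ ψ) = if c = 0 then 1 else 0 := by
    intro c
    by_cases hc : c = 0
    · subst hc
      rw [if_pos rfl]
      have h0 : Vp 0 = 1 := lprod_zero V L
      rw [h0, Matrix.one_mulVec]
      exact hnorm
    · rw [if_neg hc]
      obtain ⟨i, hci⟩ := Function.ne_iff.mp hc
      set t := star ψ ⬝ᵥ (Vp c *ᵥ ψ) with htdef
      have hUi : (U i)ᴴ *ᵥ ψ = ψ := by
        conv_lhs => rw [← hψU i]
        rw [Matrix.mulVec_mulVec, unitary_star_mul (hUc i).1, Matrix.one_mulVec]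
      have hw : U i * Vp c = omegaPow d (c i) • (Vp c * U i) := by
        have h := hweyl (Pi.single i 1) c
        rwa [hUpsingle, single_dotProduct, one_mul] at h
      have step : t = omegaPow d (c i) * t := by
        calc t = star ((U i)ᴴ *ᵥ ψ) ⬝ᵥ (Vp c *ᵥ ψ) := by rw [hUi]
          _ = (star ψ ᵥ* ((U i)ᴴ)ᴴ) ⬝ᵥ (Vp c *ᵥ ψ) := by rw [Matrix.star_mulVec]
          _ = star ψ ⬝ᵥ (U i *ᵥ (Vp c *ᵥ ψ)) := by
              rw [Matrix.conjTranspose_conjTranspose, ← Matrix.dotProduct_mulVec]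
          _ = star ψ ⬝ᵥ ((U i * Vp c) *ᵥ ψ) := by rw [Matrix.mulVec_mulVec]
          _ = omegaPow d (c i) * t := by
              rw [hw, smul_mulVec, dotProduct_smul, ← Matrix.mulVec_mulVec, hψU i,
                smul_eq_mul]
      have hz : (omegaPow d (c i) - 1) * t = 0 := by
        rw [sub_mul, one_mul, ← step, sub_self]
      rcases mul_eq_zero.mp hz with h | h
      · exact absurd (sub_eq_zero.mp h) fun he => hci ((omegaPow_eq_one_iff _).mp he)
      · exact h
  -- the gate
  set G : Mat d n := Matrix.of (fun z' z => (Vp z *ᵥ ψ) z') with hGdef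
  have hGapp : ∀ z' z, G z' z = (Vp z *ᵥ ψ) z' := fun z' z => by rw [hGdef]; rfl
  have hGstar : Gᴴ * G = 1 := by
    ext z z'
    rw [Matrix.mul_apply, Matrix.one_apply]
    have hterm : ∀ y, Gᴴ z y * G y z' = star ((Vp z *ᵥ ψ) y) * ((Vp z' *ᵥ ψ) y) := by
      intro y
      rw [Matrix.conjTranspose_apply, hGapp, hGapp]
    rw [Finset.sum_congr rfl fun y _ => hterm y]
    have hdotform : ∑ y, star ((Vp z *ᵥ ψ) y) * ((Vp z' *ᵥ ψ) y)
        = star (Vp z *ᵥ ψ) ⬝ᵥ (Vp z' *ᵥ ψ) := rfl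
    rw [hdotform, Matrix.star_mulVec, ← Matrix.dotProduct_mulVec, Matrix.mulVec_mulVec]
    have hVz : (Vp z)ᴴ * Vp z' = Vp (z' - z) := by
      have h2 : Vp z * Vp (z' - z) = Vp z' := by rw [← hVpadd, add_sub_cancel]
      calc (Vp z)ᴴ * Vp z' = (Vp z)ᴴ * (Vp z * Vp (z' - z)) := by rw [h2]
        _ = Vp (z' - z) := by rw [← Matrix.mul_assoc, unitary_star_mul (hVpu z), Matrix.one_mul]
    rw [hVz, hdot]
    by_cases h : z = z'
    · subst h; simp
    · have hne : ¬(z' - z = 0) := fun he => h (sub_eq_zero.mp he).symm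
      rw [if_neg hne, if_neg h]
  have hGu : G ∈ Matrix.unitaryGroup (Fin n → ZMod d) ℂ := by
    rw [Matrix.mem_unitaryGroup_iff', Matrix.star_eq_conjTranspose]
    exact hGstar
  have hGr : G * Gᴴ = 1 := unitary_mul_star hGu
  have hUpψ : ∀ p, Up p *ᵥ ψ = ψ := fun p => lprod_mulVec_fixed hψU p L
  -- intertwining
  have hGZ : ∀ p, G * ZP d n p = Up p * G := by
    intro p
    ext z' z
    rw [show ZP d n p = Matrix.diagonal fun z => omegaPow d (p ⬝ᵥ z) from rfl,
      Matrix.mul_diagonal, Matrix.mul_apply]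
    have hsum : ∑ y, Up p z' y * G y z = (Up p *ᵥ (Vp z *ᵥ ψ)) z' := by
      rw [mulVec_apply'']
      exact Finset.sum_congr rfl fun y _ => by rw [hGapp]
    rw [hsum, Matrix.mulVec_mulVec, hweyl p z, smul_mulVec, Pi.smul_apply,
      ← Matrix.mulVec_mulVec, hUpψ, smul_eq_mul, hGapp, mul_comm]
  have hGX : ∀ q, G * XQ d n q = Vp q * G := by
    intro q
    ext z' z
    rw [Matrix.mul_apply, Matrix.mul_apply]
    have hlhs : ∑ y, G z' y * XQ d n q y z = G z' (z + q) := by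
      rw [Finset.sum_eq_single (z + q)]
      · simp [XQ]
      · intro y _ hy; simp only [XQ, Matrix.of_apply, if_neg hy, mul_zero]
      · simp
    have hrhs : ∑ y, Vp q z' y * G y z = (Vp q *ᵥ (Vp z *ᵥ ψ)) z' := by
      rw [mulVec_apply'']
      exact Finset.sum_congr rfl fun y _ => by rw [hGapp]
    rw [hlhs, hrhs, Matrix.mulVec_mulVec, ← hVpadd, hGapp, add_comm z q]
  have hconjZ : ∀ p, G * ZP d n p * Gᴴ = Up p := fun p => by
    rw [hGZ p, Matrix.mul_assoc, hGr, Matrix.mul_one]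
  have hconjX : ∀ q, G * XQ d n q * Gᴴ = Vp q := fun q => by
    rw [hGX q, Matrix.mul_assoc, hGr, Matrix.mul_one]
  refine ⟨G, ⟨hGu, ?_⟩, fun i => ⟨?_, ?_⟩⟩
  · rintro P ⟨c, p, q, rfl⟩
    rw [gconj_smul, gconj_mul hGstar, hconjZ, hconjX]
    exact clifford_smul (clifford_mul (hUpc p) (hVpc q)) (abs_omegaPow c)
  · rw [show Zi d n i = ZP d n (Pi.single i 1) from rfl, hconjZ, hUpsingle]
  · rw [show Xi d n i = XQ d n (Pi.single i 1) from rfl, hconjX, hVpsingle]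

end Aux4
section Aux5

variable {d n : ℕ} [NeZero d]

lemma scalar_of_commutes (M : Mat d n) (hZ : ∀ i, M * Zi d n i = Zi d n i * M)
    (hX : ∀ i, M * Xi d n i = Xi d n i * M) : M = M 0 0 • 1 := by
  have hoff : ∀ z z', z ≠ z' → M z z' = 0 := by
    intro z z' hzz
    obtain ⟨i, hi⟩ := Function.ne_iff.mp hzz
    by_contra hM
    have h3 : (M * Zi d n i) z z' = (Zi d n i * M) z z' := by rw [hZ i]
    rw [show Zi d n i = Matrix.diagonal fun w => omegaPow d (Pi.single i 1 ⬝ᵥ w) from rfl,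
      Matrix.mul_diagonal, Matrix.diagonal_mul, single_dotProduct, one_mul,
      single_dotProduct, one_mul] at h3
    have heq : omegaPow d (z' i) = omegaPow d (z i) := by
      have h4 : M z z' * omegaPow d (z' i) = M z z' * omegaPow d (z i) := by
        rw [h3, mul_comm]
      exact mul_left_cancel₀ hM h4
    have h5 : omegaPow d (z' i - z i) = 1 := by
      have h6 : omegaPow d (z' i - z i) * omegaPow d (z i) = 1 * omegaPow d (z i) := by
        rw [← omegaPow_add, sub_add_cancel, heq, one_mul]
      exact mul_right_cancel₀ (omegaPow_ne_zero _) h6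
    exact hi (sub_eq_zero.mp ((omegaPow_eq_one_iff _).mp h5)).symm
  have hshift : ∀ (z : Fin n → ZMod d) (i : Fin n),
      M (z + Pi.single i 1) (z + Pi.single i 1) = M z z := by
    intro z i
    have h3 : (M * Xi d n i) (z + Pi.single i 1) z
        = (Xi d n i * M) (z + Pi.single i 1) z := by rw [hX i]
    have hl : (M * Xi d n i) (z + Pi.single i 1) z
        = M (z + Pi.single i 1) (z + Pi.single i 1) := by
      rw [Matrix.mul_apply, Finset.sum_eq_single (z + Pi.single i 1)]
      · simp [Xi, XQ]
      · intro y _ hy; simp only [Xi, XQ, Matrix.of_apply, if_neg hy, mul_zero]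
      · simp
    have hr : (Xi d n i * M) (z + Pi.single i 1) z = M z z := by
      rw [Matrix.mul_apply, Finset.sum_eq_single z]
      · simp [Xi, XQ]
      · intro y _ hy
        have hne : ¬(z + Pi.single i 1 = y + Pi.single i 1) :=
          fun he => hy (add_right_cancel he).symm
        simp only [Xi, XQ, Matrix.of_apply, if_neg hne, zero_mul]
      · simp
    rw [← hl, h3, hr]
  have hnat : ∀ (c : ℕ) (i : Fin n) (w : Fin n → ZMod d),
      M (w + Pi.single i (c : ZMod d)) (w + Pi.single i (c : ZMod d)) = M w w := by
    intro c
    induction c with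
    | zero => intro i w; simp
    | succ c ih =>
      intro i w
      have hc : ((c + 1 : ℕ) : ZMod d) = (c : ZMod d) + 1 := by push_cast; ring
      rw [hc, Pi.single_add, ← add_assoc, hshift, ih]
  have hzmod : ∀ (i : Fin n) (w : Fin n → ZMod d) (c : ZMod d),
      M (w + Pi.single i c) (w + Pi.single i c) = M w w := by
    intro i w c
    have h := hnat c.val i w
    rwa [ZMod.natCast_rightInverse c] at h
  have hdiagconst : ∀ z, M z z = M 0 0 := by
    have key : ∀ s : Finset (Fin n), ∀ z : Fin n → ZMod d,
        M (∑ i ∈ s, Pi.single i (z i)) (∑ i ∈ s, Pi.single i (z i)) = M 0 0 := by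
      intro s
      induction s using Finset.induction_on with
      | empty => intro z; simp
      | insert _ _ hj ih =>
        intro z
        rw [Finset.sum_insert hj, add_comm, hzmod, ih]
    intro z
    have h := key Finset.univ z
    rwa [Finset.univ_sum_single] at h
  ext a b
  by_cases h : a = b
  · subst h
    rw [Matrix.smul_apply, Matrix.one_apply_eq, smul_eq_mul, mul_one, hdiagconst]
  · rw [hoff a b h, Matrix.smul_apply, Matrix.one_apply_ne h, smul_eq_mul, mul_zero]

lemma uniqueness (G G' : Mat d n)
    (hGu : G ∈ Matrix.unitaryGroup (Fin n → ZMod d) ℂ)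
    (hG'u : G' ∈ Matrix.unitaryGroup (Fin n → ZMod d) ℂ)
    (h : ∀ i, G' * Zi d n i * G'ᴴ = G * Zi d n i * Gᴴ ∧
      G' * Xi d n i * G'ᴴ = G * Xi d n i * Gᴴ) :
    ∃ l : ℂ, ‖l‖ = 1 ∧ G' = l • G := by
  have hGl : Gᴴ * G = 1 := unitary_star_mul hGu
  have hGr : G * Gᴴ = 1 := unitary_mul_star hGu
  have hGl' : G'ᴴ * G' = 1 := unitary_star_mul hG'u
  have hGr' : G' * G'ᴴ = 1 := unitary_mul_star hG'u
  set M := G'ᴴ * G with hMdef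
  have conj_eq : ∀ A : Mat d n, G * A * Gᴴ = G' * A * G'ᴴ → M * A = A * M := by
    intro A hA
    have e1 : G'ᴴ * (G * A * Gᴴ) * G = M * A := by
      calc G'ᴴ * (G * A * Gᴴ) * G = G'ᴴ * G * A * (Gᴴ * G) := by
            simp only [Matrix.mul_assoc]
        _ = M * A := by rw [hGl, Matrix.mul_one, hMdef]
    have e2 : G'ᴴ * (G' * A * G'ᴴ) * G = A * M := by
      calc G'ᴴ * (G' * A * G'ᴴ) * G = (G'ᴴ * G') * (A * (G'ᴴ * G)) := by
            simp only [Matrix.mul_assoc]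
        _ = A * M := by rw [hGl', Matrix.one_mul, hMdef]
    rw [← e1, ← e2, hA]
  have hMZ : ∀ i, M * Zi d n i = Zi d n i * M := fun i => conj_eq _ (h i).1.symm
  have hMX : ∀ i, M * Xi d n i = Xi d n i * M := fun i => conj_eq _ (h i).2.symm
  have hc := scalar_of_commutes M hMZ hMX
  set c : ℂ := M 0 0 with hcdef
  have hMu : Mᴴ * M = 1 := by
    rw [hMdef, Matrix.conjTranspose_mul, Matrix.conjTranspose_conjTranspose]
    calc Gᴴ * G' * (G'ᴴ * G) = Gᴴ * ((G' * G'ᴴ) * G) := by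
          simp only [Matrix.mul_assoc]
      _ = 1 := by rw [hGr', Matrix.one_mul, hGl]
  have hcc : star c * c = 1 := by
    have h1 : (star c * c) • (1 : Mat d n) = 1 := by
      have h2 : Mᴴ * M = (star c * c) • (1 : Mat d n) := by
        rw [hc, Matrix.conjTranspose_smul, Matrix.conjTranspose_one, Matrix.smul_mul,
          Matrix.mul_smul, smul_smul, Matrix.one_mul]
      rw [← h2, hMu]
    have h3 := congrFun (congrFun h1 0) 0
    simpa [Matrix.smul_apply, Matrix.one_apply_eq, smul_eq_mul] using h3
  have habs : ‖c‖ = 1 := by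
    have h2 : (Complex.normSq c : ℂ) = 1 := by
      rw [← hcc, Complex.star_def, mul_comm, Complex.mul_conj]
    have h3 : Complex.normSq c = 1 := by exact_mod_cast h2
    rw [Complex.norm_def, h3, Real.sqrt_one]
  have hc0 : c ≠ 0 := by
    intro h0
    rw [h0, norm_zero] at habs
    norm_num at habs
  have hGG' : c • G' = G := by
    have h4 : G' * M = G := by
      rw [hMdef, ← Matrix.mul_assoc, hGr', Matrix.one_mul]
    rw [hc] at h4
    rw [← h4, Matrix.mul_smul, Matrix.mul_one]
  refine ⟨c⁻¹, by rw [norm_inv, habs, inv_one], ?_⟩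
  rw [← hGG', smul_smul, inv_mul_cancel₀ hc0, one_smul]

end Aux5

/-- Third-level gates, up to phase, correspond bijectively to conjugate tuples of
Clifford gates. -/
theorem stmt15 (d n : ℕ) [NeZero d] (hp : Nat.Prime d) (hodd : Odd d) :
    (∀ U V : Fin n → Mat d n, IsConjCliffTuple d n U V →
      ∃ G ∈ Third d n,
        (∀ i, G * Zi d n i * Gᴴ = U i ∧ G * Xi d n i * Gᴴ = V i) ∧
        ∀ G' ∈ Third d n,
          (∀ i, G' * Zi d n i * G'ᴴ = U i ∧ G' * Xi d n i * G'ᴴ = V i) →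
          ∃ l : ℂ, ‖l‖ = 1 ∧ G' = l • G) ∧
    (∀ G ∈ Third d n,
      IsConjCliffTuple d n (fun i => G * Zi d n i * Gᴴ) (fun i => G * Xi d n i * Gᴴ)) := by
  have hd1 : 1 < d := hp.one_lt
  constructor
  · intro U V hT
    obtain ⟨hUc, hVc, hUd, hVd, hUV, hUU, hUVc, hVV⟩ := hT
    obtain ⟨G, hGT, hGeq⟩ := existence hd1 U V hUc hVc hUd hVd hUV
      (fun i j hij => hUU i j hij) (fun i j hij => hUVc i j hij) (fun i j hij => hVV i j hij)
    refine ⟨G, hGT, hGeq, ?_⟩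
    intro G' hG'T hG'eq
    exact uniqueness G G' hGT.1 hG'T.1
      (fun i => ⟨(hG'eq i).1.trans ((hGeq i).1).symm, (hG'eq i).2.trans ((hGeq i).2).symm⟩)
  · intro G hG
    exact part2 hd1 G hG

end
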